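/- Let a > -1 and 1 < p < ∞. The operator H_{α,β,γ} is bounded from L^p((0,∞), y^a dy) to L^∞((0,∞)) if and only if γ = α + β + 1 - (a+1)/p, α > 0, and a+1 < p(β+1). -/

import Mathlib

open MeasureTheory Set ENNReal

/-- The measure `x^a dx` on `(0,∞)`. -/
noncomputable def wMeasure (a : ℝ) : Measure ℝ :=
  (volume.restrict (Ioi (0:ℝ))).withDensity (fun x => ENNReal.ofReal (x ^ a))

/-- The Hilbert-type operator `H_{α,β,γ} f(x) = x^α ∫₀^∞ f(y) y^β/(x+y)^γ dy`. -/
noncomputable def Hop (α β γ : ℝ) (f : ℝ → ℝ) : ℝ → ℝ :=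
  fun x => x ^ α * ∫ y in Ioi (0:ℝ), f y * y ^ β / (x + y) ^ γ

/-!
Necessity: test `H` on `f = 𝟙_(A,B] y ^ (-(a + 1) / p)`, whose norm in `L^p(y^a dy)` is
`log (B / A) ^ (1 / p)`. For `(A, B] = (l, 2l]` and `x ∈ (l, 2l]` one gets
`Hf(x) ≳ l ^ (α + β + 1 - γ - (a + 1) / p)`, bounded in `l > 0` only if the exponent
vanishes. If `a + 1 ≥ p (β + 1)` (on `(e^(-L), 1]`) or `α ≤ 0` (on `(1, e^L]`), the kernel
dominates `c / y`, so `Hf ≳ L` on `(1, 2]` against a norm `L ^ (1 / p)`, impossible since `p > 1`.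

Sufficiency: with `q` the conjugate exponent, Hölder's inequality in `L^p(y^a dy)` bounds
`|Hf(x)|` by `x ^ α ‖f‖` times `(∫ y ^ s (x + y) ^ (-r) dy) ^ (1 / q)`, where
`s = (β - a) q + a` and `r = γ q`. This integral converges when `a + 1 < p (β + 1)` and `α > 0`,
and by dilation it is `x ^ (-q α)` times a constant, which cancels `x ^ α`.
-/

lemma min_rpow_le_rpow {A B y c : ℝ} (hA : 0 < A) (hAy : A ≤ y) (hyB : y ≤ B) :
    min (A ^ c) (B ^ c) ≤ y ^ c := by
  rcases le_or_gt 0 c with hc | hc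
  · exact (min_le_left _ _).trans (Real.rpow_le_rpow hA.le hAy hc)
  · exact (min_le_right _ _).trans (Real.rpow_le_rpow_of_nonpos (hA.trans_le hAy) hyB hc.le)

lemma rpow_le_max_rpow {A B y c : ℝ} (hA : 0 < A) (hAy : A ≤ y) (hyB : y ≤ B) :
    y ^ c ≤ max (A ^ c) (B ^ c) := by
  rcases le_or_gt 0 c with hc | hc
  · exact (Real.rpow_le_rpow (hA.le.trans hAy) hyB hc).trans (le_max_right _ _)
  · exact (Real.rpow_le_rpow_of_nonpos hA hAy hc.le).trans (le_max_left _ _)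

lemma mul_min_rpow_le_rpow {l u v c z : ℝ} (hl : 0 < l) (hu : 0 < u)
    (hlz : l * u ≤ z) (hzl : z ≤ l * v) :
    l ^ c * min (u ^ c) (v ^ c) ≤ z ^ c := by
  have hz : z = l * (z / l) := by field_simp
  rw [hz, Real.mul_rpow hl.le (div_nonneg ((mul_pos hl hu).le.trans hlz) hl.le)]
  gcongr
  exact min_rpow_le_rpow hu ((le_div_iff₀' hl).2 hlz) ((div_le_iff₀' hl).2 hzl)

lemma rpow_le_mul_max_rpow {l u v c z : ℝ} (hl : 0 < l) (hu : 0 < u)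
    (hlz : l * u ≤ z) (hzl : z ≤ l * v) :
    z ^ c ≤ l ^ c * max (u ^ c) (v ^ c) := by
  have hz : z = l * (z / l) := by field_simp
  rw [hz, Real.mul_rpow hl.le (div_nonneg ((mul_pos hl hu).le.trans hlz) hl.le)]
  gcongr
  exact rpow_le_max_rpow hu ((le_div_iff₀' hl).2 hlz) ((div_le_iff₀' hl).2 hzl)

lemma eq_zero_of_forall_rpow_le {d K : ℝ} (h : ∀ l : ℝ, 0 < l → l ^ d ≤ K) : d = 0 := by
  by_contra hd
  have hK : 0 < K + 1 := by linarith [by simpa using h 1 one_pos]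
  have := h ((K + 1) ^ d⁻¹) (by positivity)
  rw [← Real.rpow_mul hK.le, inv_mul_cancel₀ hd, Real.rpow_one] at this
  linarith

lemma not_forall_mul_le_mul_rpow_inv {c K p : ℝ} (hc : 0 < c) (hp : 1 < p) :
    ¬ ∀ L : ℝ, 0 < L → c * L ≤ K * L ^ (1 / p) := by
  intro h
  have hd : 1 - 1 / p = 0 := eq_zero_of_forall_rpow_le (K := K / c) fun L hL => by
    rw [Real.rpow_sub hL, Real.rpow_one, div_le_div_iff₀ (by positivity) hc]
    linarith [h L hL]
  have : 1 / p < 1 := (div_lt_one (by linarith)).2 hp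
  linarith

lemma integrableOn_inv_Ioc {A B : ℝ} (hA : 0 < A) :
    IntegrableOn (fun y : ℝ => y⁻¹) (Ioc A B) :=
  (continuousOn_inv₀.mono fun _ hy => (hA.trans_le hy.1).ne').integrableOn_Icc
    |>.mono_set Ioc_subset_Icc_self

lemma setIntegral_inv_Ioc {A B : ℝ} (hA : 0 < A) (hAB : A ≤ B) :
    ∫ y in Ioc A B, y⁻¹ = Real.log (B / A) := by
  rw [← intervalIntegral.integral_of_le hAB, integral_inv_of_pos hA (hA.trans_le hAB)]

lemma integrableOn_rpow_mul_add_rpow_Ioc {s r x A B : ℝ} (hx : 0 ≤ x) (hA : 0 < A) :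
    IntegrableOn (fun y => y ^ s * (x + y) ^ r) (Ioc A B) := by
  refine (ContinuousOn.integrableOn_Icc fun y hy => ?_).mono_set Ioc_subset_Icc_self
  have hy : 0 < y := hA.trans_le hy.1
  have hxy : x + y ≠ 0 := (add_pos_of_nonneg_of_pos hx hy).ne'
  exact ((Real.continuousAt_rpow_const y s (.inl hy.ne')).mul
    ((continuousAt_const.add continuousAt_id).rpow_const (.inl hxy))).continuousWithinAt

lemma integrableOn_rpow_mul_add_rpow_neg_Ioi {x s r : ℝ} (hx : 0 < x) (hs : -1 < s)
    (hsr : s + 1 < r) :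
    IntegrableOn (fun y => y ^ s * (x + y) ^ (-r)) (Ioi 0) := by
  have hmeas : AEStronglyMeasurable fun y : ℝ => y ^ s * (x + y) ^ (-r) := by fun_prop
  rw [← Ioc_union_Ioi_eq_Ioi zero_le_one]
  refine IntegrableOn.union ?_ ?_
  · rw [integrableOn_Ioc_iff_integrableOn_Ioo]
    refine (((intervalIntegral.integrableOn_Ioo_rpow_iff one_pos).2 hs).mul_const
      (max (x ^ (-r)) ((x + 1) ^ (-r)))).mono' hmeas.restrict
      (ae_restrict_of_forall_mem measurableSet_Ioo fun y hy => ?_)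
    rw [Real.norm_of_nonneg (by have := hy.1; positivity)]
    exact mul_le_mul_of_nonneg_left
      (rpow_le_max_rpow hx (by linarith [hy.1]) (by linarith [hy.2])) (Real.rpow_nonneg hy.1.le _)
  · refine ((integrableOn_Ioi_rpow_of_lt (a := s + -r) (by linarith) one_pos).mul_const
      (max ((1 : ℝ) ^ (-r)) ((1 + x) ^ (-r)))).mono' hmeas.restrict
      (ae_restrict_of_forall_mem measurableSet_Ioi fun y (hy : 1 < y) => ?_)
    have hy0 : 0 < y := one_pos.trans hy
    rw [Real.norm_of_nonneg (by positivity), Real.rpow_add hy0, mul_assoc]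
    exact mul_le_mul_of_nonneg_left
      (rpow_le_mul_max_rpow hy0 one_pos (by linarith) (by nlinarith)) (Real.rpow_nonneg hy0.le _)

lemma integral_rpow_mul_add_rpow_neg_Ioi (s r : ℝ) {x : ℝ} (hx : 0 < x) :
    ∫ y in Ioi 0, y ^ s * (x + y) ^ (-r)
      = x ^ (s + 1 - r) * ∫ y in Ioi 0, y ^ s * (1 + y) ^ (-r) := by
  have hdilate := integral_comp_mul_left_Ioi (fun y => y ^ s * (x + y) ^ (-r)) 0 hx
  have hkernel : ∀ u ∈ Ioi (0 : ℝ),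
      (x * u) ^ s * (x + x * u) ^ (-r) = x ^ (s - r) * (u ^ s * (1 + u) ^ (-r)) := by
    intro u (hu : 0 < u)
    rw [Real.mul_rpow hx.le hu.le, show x + x * u = x * (1 + u) by ring,
      Real.mul_rpow hx.le (by positivity), sub_eq_add_neg, Real.rpow_add hx]
    ring
  rw [setIntegral_congr_fun measurableSet_Ioi hkernel, integral_const_mul, mul_zero,
    smul_eq_mul] at hdilate
  rw [← mul_inv_cancel_left₀ hx.ne' (∫ y in Ioi 0, _), ← hdilate, ← mul_assoc,
    show s + 1 - r = s - r + 1 by ring, Real.rpow_add_one hx.ne', mul_comm x]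

lemma ofReal_le_eLpNorm_top_of_le_on_Ioc {g : ℝ → ℝ} {m u v : ℝ} (hu : 0 ≤ u)
    (huv : u < v) (hm : ∀ x ∈ Ioc u v, m ≤ g x) :
    ENNReal.ofReal m ≤ eLpNorm g ∞ (volume.restrict (Ioi 0)) := by
  have hne : volume.restrict (Ioc u v) ≠ 0 := by simpa using huv
  calc ENNReal.ofReal m ≤ eLpNorm (fun _ => max m 0) ∞ (volume.restrict (Ioc u v)) := by
        rw [eLpNorm_exponent_top, eLpNormEssSup_const _ hne,
          Real.enorm_eq_ofReal (le_max_right _ _)]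
        exact ofReal_le_ofReal (le_max_left _ _)
    _ ≤ eLpNorm g ∞ (volume.restrict (Ioc u v)) := by
        refine eLpNorm_mono_ae (ae_restrict_of_forall_mem measurableSet_Ioc fun x hx => ?_)
        rw [Real.norm_of_nonneg (le_max_right _ _), Real.norm_eq_abs]
        exact max_le ((hm x hx).trans (le_abs_self _)) (abs_nonneg _)
    _ ≤ eLpNorm g ∞ (volume.restrict (Ioi 0)) :=
        eLpNorm_mono_measure _ (Measure.restrict_mono (fun x hx => hu.trans_lt hx.1) le_rfl)

lemma lintegral_wMeasure (a : ℝ) {g : ℝ → ℝ≥0∞} (hg : Measurable g) :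
    ∫⁻ y, g y ∂wMeasure a = ∫⁻ y in Ioi 0, ENNReal.ofReal (y ^ a) * g y :=
  lintegral_withDensity_eq_lintegral_mul _ (by fun_prop) hg

lemma eLpNorm_indicator_rpow_wMeasure {a p t A B : ℝ} (hp : 0 < p) (ht : t * p + a = -1)
    (hA : 0 < A) (hAB : A ≤ B) :
    eLpNorm ((Ioc A B).indicator fun y => y ^ t) (ENNReal.ofReal p) (wMeasure a)
      = ENNReal.ofReal (Real.log (B / A)) ^ (1 / p) := by
  have hmeas : Measurable ((Ioc A B).indicator fun y : ℝ => y ^ t) :=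
    (by fun_prop : Measurable fun y : ℝ => y ^ t).indicator measurableSet_Ioc
  rw [eLpNorm_eq_lintegral_rpow_enorm_toReal (by simpa using hp) ofReal_ne_top,
    ENNReal.toReal_ofReal hp.le, lintegral_wMeasure a (hmeas.enorm.pow_const p)]
  congr 1
  have hdensity : ∀ y ∈ Ioi (0 : ℝ), ENNReal.ofReal (y ^ a) *
      ‖(Ioc A B).indicator (fun y => y ^ t) y‖ₑ ^ p
        = (Ioc A B).indicator (fun y => ENNReal.ofReal y⁻¹) y := by
    intro y (hy : 0 < y)
    by_cases hmem : y ∈ Ioc A B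
    · rw [indicator_of_mem hmem, indicator_of_mem hmem, Real.enorm_eq_ofReal (by positivity),
        ENNReal.ofReal_rpow_of_nonneg (by positivity) hp.le, ← ENNReal.ofReal_mul (by positivity),
        ← Real.rpow_mul hy.le, ← Real.rpow_add hy, add_comm, ht, Real.rpow_neg_one]
    · simp [indicator_of_notMem hmem, ENNReal.zero_rpow_of_pos hp]
  have hsub : Ioc A B ⊆ Ioi 0 := fun y hy => hA.trans hy.1
  rw [setLIntegral_congr_fun measurableSet_Ioi hdensity, lintegral_indicator measurableSet_Ioc,
    Measure.restrict_restrict measurableSet_Ioc, inter_eq_left.2 hsub,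
    ← ofReal_integral_eq_lintegral_ofReal (integrableOn_inv_Ioc hA)
      (ae_restrict_of_forall_mem measurableSet_Ioc fun _ hy => (inv_pos.2 (hA.trans hy.1)).le),
    setIntegral_inv_Ioc hA hAB]

lemma Hop_indicator_rpow (α β γ t : ℝ) {A B x : ℝ} (hA : 0 < A) (hx : 0 < x) :
    Hop α β γ ((Ioc A B).indicator fun y => y ^ t) x
      = x ^ α * ∫ y in Ioc A B, y ^ (t + β) * (x + y) ^ (-γ) := by
  have hsub : Ioc A B ⊆ Ioi 0 := fun y hy => hA.trans hy.1
  have hind : (fun y => (Ioc A B).indicator (fun y => y ^ t) y * y ^ β / (x + y) ^ γ)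
      = (Ioc A B).indicator fun y => y ^ (t + β) * (x + y) ^ (-γ) := by
    ext y
    by_cases hmem : y ∈ Ioc A B
    · have hy : 0 < y := hA.trans hmem.1
      rw [indicator_of_mem hmem, indicator_of_mem hmem, Real.rpow_add hy,
        Real.rpow_neg (by positivity), div_eq_mul_inv]
    · simp [indicator_of_notMem hmem]
  rw [Hop, hind, integral_indicator measurableSet_Ioc,
    Measure.restrict_restrict measurableSet_Ioc, inter_eq_left.2 hsub]

lemma enorm_Hop_le {a p q α β γ : ℝ} (hpq : p.HolderConjugate q) {f : ℝ → ℝ}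
    (hf : Measurable f) {x : ℝ} (hx : 0 < x) :
    ‖Hop α β γ f x‖ₑ ≤ ENNReal.ofReal (x ^ α) *
      (eLpNorm f (ENNReal.ofReal p) (wMeasure a) * (∫⁻ y in Ioi 0, ENNReal.ofReal (y ^ a) *
        ENNReal.ofReal (y ^ (β - a) / (x + y) ^ γ) ^ q) ^ (1 / q)) := by
  set k : ℝ → ℝ≥0∞ := fun y => ENNReal.ofReal (y ^ (β - a) / (x + y) ^ γ)
  have hk : Measurable k := by fun_prop
  have hweight : ∀ y ∈ Ioi (0 : ℝ), ‖f y * y ^ β / (x + y) ^ γ‖ₑ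
      = ENNReal.ofReal (y ^ a) * (‖f y‖ₑ * k y) := by
    intro y (hy : 0 < y)
    have hker : 0 ≤ y ^ β / (x + y) ^ γ := by positivity
    rw [mul_div_assoc, enorm_mul, Real.enorm_eq_ofReal hker, mul_left_comm,
      ← ENNReal.ofReal_mul (by positivity), ← mul_div_assoc, ← Real.rpow_add hy,
      add_sub_cancel]
  have hnorm : (∫⁻ y, ‖f y‖ₑ ^ p ∂wMeasure a) ^ (1 / p)
      = eLpNorm f (ENNReal.ofReal p) (wMeasure a) := by
    rw [eLpNorm_eq_lintegral_rpow_enorm_toReal (by simpa using hpq.pos) ofReal_ne_top,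
      ENNReal.toReal_ofReal hpq.nonneg]
  calc ‖Hop α β γ f x‖ₑ
      ≤ ENNReal.ofReal (x ^ α) * ∫⁻ y in Ioi 0, ‖f y * y ^ β / (x + y) ^ γ‖ₑ := by
        rw [Hop, enorm_mul, Real.enorm_eq_ofReal (by positivity)]
        exact mul_le_mul_right (enorm_integral_le_lintegral_enorm _) _
    _ = ENNReal.ofReal (x ^ α) * ∫⁻ y, ((fun y => ‖f y‖ₑ) * k) y ∂wMeasure a := by
        rw [setLIntegral_congr_fun measurableSet_Ioi hweight,
          lintegral_wMeasure a (hf.enorm.mul hk)]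
        rfl
    _ ≤ ENNReal.ofReal (x ^ α) * ((∫⁻ y, ‖f y‖ₑ ^ p ∂wMeasure a) ^ (1 / p) *
          (∫⁻ y, k y ^ q ∂wMeasure a) ^ (1 / q)) :=
        mul_le_mul_right (ENNReal.lintegral_mul_le_Lp_mul_Lq _ hpq
          hf.enorm.aemeasurable hk.aemeasurable) _
    _ = _ := by rw [hnorm, lintegral_wMeasure a (hk.pow_const q)]

lemma setLIntegral_ofReal_rpow_mul_kernel_rpow {a β γ q x : ℝ} (hq : 0 ≤ q) (hx : 0 < x) :
    ∫⁻ y in Ioi 0, ENNReal.ofReal (y ^ a) * ENNReal.ofReal (y ^ (β - a) / (x + y) ^ γ) ^ q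
      = ∫⁻ y in Ioi 0, ENNReal.ofReal (y ^ ((β - a) * q + a) * (x + y) ^ (-(γ * q))) := by
  refine setLIntegral_congr_fun measurableSet_Ioi fun y (hy : 0 < y) => ?_
  rw [ENNReal.ofReal_rpow_of_nonneg (by positivity) hq, ← ENNReal.ofReal_mul (by positivity),
    Real.div_rpow (by positivity) (by positivity), ← Real.rpow_mul hy.le,
    ← Real.rpow_mul (by positivity), Real.rpow_neg (by positivity), Real.rpow_add hy]
  congr 1
  ring

def HopBoundedBy (a p α β γ : ℝ) (C : ℝ≥0∞) : Prop :=
  ∀ f : ℝ → ℝ, Measurable f →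
    eLpNorm (Hop α β γ f) ⊤ (volume.restrict (Ioi 0))
      ≤ C * eLpNorm f (ENNReal.ofReal p) (wMeasure a)

namespace HopBoundedBy

variable {a p α β γ : ℝ} {C : ℝ≥0∞}

lemma le_of_le_on_Ioc (hb : HopBoundedBy a p α β γ C) (hC : C ≠ ⊤) (hp : 0 < p)
    {A B u v m : ℝ} (hA : 0 < A) (hAB : A ≤ B) (hu : 0 ≤ u) (huv : u < v)
    (hm : ∀ x ∈ Ioc u v,
      m ≤ x ^ α * ∫ y in Ioc A B, y ^ (β - (a + 1) / p) * (x + y) ^ (-γ)) :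
    m ≤ C.toReal * Real.log (B / A) ^ (1 / p) := by
  set t := -(a + 1) / p
  have ht : t * p + a = -1 := by simp only [t]; field_simp; ring
  have hexp : t + β = β - (a + 1) / p := by ring
  have hmeas : Measurable ((Ioc A B).indicator fun y : ℝ => y ^ t) :=
    (by fun_prop : Measurable fun y : ℝ => y ^ t).indicator measurableSet_Ioc
  have hlog : 0 ≤ Real.log (B / A) := Real.log_nonneg ((one_le_div hA).2 hAB)
  have hlower := ofReal_le_eLpNorm_top_of_le_on_Ioc
      (g := Hop α β γ ((Ioc A B).indicator fun y => y ^ t)) hu huv fun x hx => by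
    rw [Hop_indicator_rpow α β γ t hA (hu.trans_lt hx.1), hexp]
    exact hm x hx
  have := hlower.trans (hb _ hmeas)
  rwa [eLpNorm_indicator_rpow_wMeasure hp ht hA hAB, ← ENNReal.ofReal_toReal hC,
    ENNReal.ofReal_rpow_of_nonneg hlog (by positivity), ← ENNReal.ofReal_mul toReal_nonneg,
    ENNReal.ofReal_le_ofReal_iff (by positivity)] at this

lemma gamma_eq (hb : HopBoundedBy a p α β γ C) (hC : C ≠ ⊤) (hp : 0 < p) :
    γ = α + β + 1 - (a + 1) / p := by
  set σ := β - (a + 1) / p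
  set m₁ := min ((1 : ℝ) ^ α) (2 ^ α)
  set m₂ := min ((1 : ℝ) ^ σ) (2 ^ σ)
  set m₃ := min ((2 : ℝ) ^ (-γ)) (4 ^ (-γ))
  have hm : 0 < m₁ * m₂ * m₃ := by positivity
  suffices α + σ + -γ + 1 = 0 by linarith
  refine eq_zero_of_forall_rpow_le (K := C.toReal * Real.log 2 ^ (1 / p) / (m₁ * m₂ * m₃))
    fun l hl => (le_div_iff₀' hm).2 ?_
  have hl2 : l ≤ 2 * l := by linarith
  have hwindow : ∀ x ∈ Ioc l (2 * l), m₁ * m₂ * m₃ * l ^ (α + σ + -γ + 1)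
      ≤ x ^ α * ∫ y in Ioc l (2 * l), y ^ σ * (x + y) ^ (-γ) := by
    intro x hx
    have hkernel : ∀ y ∈ Ioc l (2 * l),
        l ^ σ * m₂ * (l ^ (-γ) * m₃) ≤ y ^ σ * (x + y) ^ (-γ) :=
      fun y hy => mul_le_mul
        (mul_min_rpow_le_rpow hl one_pos (by linarith [hy.1]) (by linarith [hy.2]))
        (mul_min_rpow_le_rpow hl two_pos (by linarith [hx.1, hy.1]) (by linarith [hx.2, hy.2]))
        (by positivity) (Real.rpow_nonneg (by linarith [hy.1]) _)
    have hint := setIntegral_ge_of_const_le_real measurableSet_Ioc (by simp) hkernel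
      (integrableOn_rpow_mul_add_rpow_Ioc (by linarith [hx.1]) hl)
    rw [Real.volume_real_Ioc_of_le hl2, show 2 * l - l = l by ring] at hint
    calc m₁ * m₂ * m₃ * l ^ (α + σ + -γ + 1)
        = l ^ α * m₁ * (l ^ σ * m₂ * (l ^ (-γ) * m₃) * l) := by
          rw [Real.rpow_add hl, Real.rpow_add hl, Real.rpow_add hl, Real.rpow_one]; ring
      _ ≤ x ^ α * ∫ y in Ioc l (2 * l), y ^ σ * (x + y) ^ (-γ) :=
          mul_le_mul (mul_min_rpow_le_rpow hl one_pos (by linarith [hx.1]) (by linarith [hx.2]))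
            hint (by positivity) (Real.rpow_nonneg (by linarith [hx.1]) _)
  have := hb.le_of_le_on_Ioc hC hp hl hl2 hl.le (by linarith) hwindow
  rwa [mul_div_cancel_right₀ _ hl.ne'] at this

lemma false_of_inv_le_kernel (hb : HopBoundedBy a p α β γ C) (hC : C ≠ ⊤) (hp : 1 < p)
    {c : ℝ} (hc : 0 < c)
    (hkernel : ∀ L : ℝ, 0 < L → ∃ A > 0,
      ∀ x ∈ Ioc (1 : ℝ) 2, ∀ y ∈ Ioc A (A * Real.exp L),
        c * y⁻¹ ≤ y ^ (β - (a + 1) / p) * (x + y) ^ (-γ)) :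
    False := by
  set m := min ((1 : ℝ) ^ α) (2 ^ α)
  refine not_forall_mul_le_mul_rpow_inv (K := C.toReal) (by positivity : 0 < m * c) hp
    fun L hL => ?_
  obtain ⟨A, hA, hbound⟩ := hkernel L hL
  have hAB : A ≤ A * Real.exp L := le_mul_of_one_le_right hA.le (Real.one_le_exp hL.le)
  have hlog : Real.log (A * Real.exp L / A) = L := by
    rw [mul_div_cancel_left₀ _ hA.ne', Real.log_exp]
  have hwindow : ∀ x ∈ Ioc (1 : ℝ) 2, m * c * L
      ≤ x ^ α * ∫ y in Ioc A (A * Real.exp L), y ^ (β - (a + 1) / p) * (x + y) ^ (-γ) := by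
    intro x hx
    have hint := setIntegral_mono_on ((integrableOn_inv_Ioc hA).const_mul c)
      (integrableOn_rpow_mul_add_rpow_Ioc (by linarith [hx.1]) hA) measurableSet_Ioc
      (hbound x hx)
    rw [integral_const_mul, setIntegral_inv_Ioc hA hAB, hlog] at hint
    rw [mul_assoc]
    exact mul_le_mul (min_rpow_le_rpow one_pos hx.1.le hx.2) hint (by positivity)
      (Real.rpow_nonneg (by linarith [hx.1]) _)
  have := hb.le_of_le_on_Ioc hC (by linarith) hA hAB zero_le_one one_lt_two hwindow
  rwa [hlog] at this

lemma add_one_lt_mul_add_one (hb : HopBoundedBy a p α β γ C) (hC : C ≠ ⊤) (hp : 1 < p) :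
    a + 1 < p * (β + 1) := by
  by_contra! hβ
  have hσ : β - (a + 1) / p ≤ -1 := by
    have := (le_div_iff₀' (by linarith : 0 < p)).2 hβ
    linarith
  refine hb.false_of_inv_le_kernel hC hp (c := min ((1 : ℝ) ^ (-γ)) (3 ^ (-γ))) (by positivity)
    fun L _ => ⟨Real.exp (-L), Real.exp_pos _, fun x hx y hy => ?_⟩
  have hy0 : 0 < y := (Real.exp_pos _).trans hy.1
  have hy1 : y ≤ 1 := by simpa [← Real.exp_add] using hy.2
  rw [mul_comm, ← Real.rpow_neg_one]
  exact mul_le_mul (Real.rpow_le_rpow_of_exponent_ge hy0 hy1 hσ)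
    (min_rpow_le_rpow one_pos (by linarith [hx.1]) (by linarith [hx.2])) (by positivity)
    (by positivity)

lemma alpha_pos (hb : HopBoundedBy a p α β γ C) (hC : C ≠ ⊤) (hp : 1 < p)
    (hγ : γ = α + β + 1 - (a + 1) / p) : 0 < α := by
  by_contra! hα
  set σ := β - (a + 1) / p
  set c := min ((1 : ℝ) ^ (-γ)) (3 ^ (-γ))
  have hσ : -1 ≤ σ + -γ := by rw [hγ]; linarith
  refine hb.false_of_inv_le_kernel hC hp (c := c) (by positivity)
    fun L _ => ⟨1, one_pos, fun x hx y hy => ?_⟩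
  have hy0 : 0 < y := one_pos.trans hy.1
  calc c * y⁻¹ = y ^ (-1 : ℝ) * c := by rw [Real.rpow_neg_one, mul_comm]
    _ ≤ y ^ (σ + -γ) * c := by gcongr; exact hy.1.le
    _ = y ^ σ * (y ^ (-γ) * c) := by rw [Real.rpow_add hy0, mul_assoc]
    _ ≤ y ^ σ * (x + y) ^ (-γ) := by
        gcongr
        exact mul_min_rpow_le_rpow hy0 one_pos (by linarith [hx.1]) (by linarith [hx.2, hy.1])

end HopBoundedBy

lemma exists_hopBoundedBy {a p α β γ : ℝ} (hp : 1 < p) (hγ : γ = α + β + 1 - (a + 1) / p)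
    (hα : 0 < α) (hβ : a + 1 < p * (β + 1)) :
    ∃ C : ℝ≥0∞, C ≠ ⊤ ∧ HopBoundedBy a p α β γ C := by
  set q := p.conjExponent
  have hpq : p.HolderConjugate q := .conjExponent hp
  have hq : q = p / (p - 1) := hpq.conjugate_eq
  have hp1 : 0 < p - 1 := by linarith
  set s := (β - a) * q + a
  set r := γ * q
  have hs : -1 < s := by
    have : s = (p * β - a) / (p - 1) := by simp only [s, hq]; field_simp; ring
    rw [this, lt_div_iff₀ hp1]
    nlinarith
  have hexp : s + 1 - r = -(α * q) := by simp only [s, r, hγ, hq]; field_simp; ring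
  have hsr : s + 1 < r := by linarith [mul_pos hα hpq.symm.pos]
  set K := ∫ y in Ioi (0 : ℝ), y ^ s * (1 + y) ^ (-r)
  have hK : 0 ≤ K := setIntegral_nonneg measurableSet_Ioi fun y (hy : 0 < y) => by positivity
  refine ⟨ENNReal.ofReal (K ^ (1 / q)), ofReal_ne_top, fun f hf => ?_⟩
  rw [eLpNorm_exponent_top]
  refine eLpNormEssSup_le_of_ae_enorm_bound
    (ae_restrict_of_forall_mem measurableSet_Ioi fun x (hx : 0 < x) => ?_)
  have hlint : ∫⁻ y in Ioi 0, ENNReal.ofReal (y ^ a) *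
      ENNReal.ofReal (y ^ (β - a) / (x + y) ^ γ) ^ q = ENNReal.ofReal (x ^ (s + 1 - r) * K) := by
    rw [setLIntegral_ofReal_rpow_mul_kernel_rpow hpq.symm.nonneg hx,
      ← integral_rpow_mul_add_rpow_neg_Ioi s r hx,
      ofReal_integral_eq_lintegral_ofReal (integrableOn_rpow_mul_add_rpow_neg_Ioi hx hs hsr)
        (ae_restrict_of_forall_mem measurableSet_Ioi fun y (hy : 0 < y) => by positivity)]
  calc ‖Hop α β γ f x‖ₑ
      ≤ ENNReal.ofReal (x ^ α) * (eLpNorm f (ENNReal.ofReal p) (wMeasure a) *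
          ENNReal.ofReal (x ^ (s + 1 - r) * K) ^ (1 / q)) := hlint ▸ enorm_Hop_le hpq hf hx
    _ = ENNReal.ofReal (K ^ (1 / q)) * eLpNorm f (ENNReal.ofReal p) (wMeasure a) := by
        rw [ENNReal.ofReal_rpow_of_nonneg (by positivity) hpq.symm.one_div_nonneg,
          Real.mul_rpow (by positivity) hK, ← Real.rpow_mul hx.le, hexp,
          show -(α * q) * (1 / q) = -α by
            rw [neg_mul, mul_assoc, mul_one_div_cancel hpq.symm.ne_zero, mul_one], mul_left_comm,
          ← ENNReal.ofReal_mul (by positivity), ← mul_assoc, ← Real.rpow_add hx,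
          add_neg_cancel, Real.rpow_zero, one_mul, mul_comm]

theorem stmt_11_general (a p α β γ : ℝ) (hp : 1 < p) :
    (∃ C : ℝ≥0∞, C ≠ ⊤ ∧ ∀ f : ℝ → ℝ, Measurable f →
        eLpNorm (Hop α β γ f) ⊤ (volume.restrict (Ioi (0:ℝ)))
          ≤ C * eLpNorm f (ENNReal.ofReal p) (wMeasure a))
      ↔ (γ = α + β + 1 - (a + 1) / p ∧ 0 < α ∧ a + 1 < p * (β + 1)) := by
  constructor
  · rintro ⟨C, hC, hb : HopBoundedBy a p α β γ C⟩
    have hγ := hb.gamma_eq hC (by linarith)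
    exact ⟨hγ, hb.alpha_pos hC hp hγ, hb.add_one_lt_mul_add_one hC hp⟩
  · rintro ⟨hγ, hα, hβ⟩
    exact exists_hopBoundedBy hp hγ hα hβ

theorem stmt_11 (a p α β γ : ℝ) (ha : -1 < a) (hp : 1 < p) :
    (∃ C : ℝ≥0∞, C ≠ ⊤ ∧ ∀ f : ℝ → ℝ, Measurable f →
        eLpNorm (Hop α β γ f) ⊤ (volume.restrict (Ioi (0:ℝ)))
          ≤ C * eLpNorm f (ENNReal.ofReal p) (wMeasure a))
      ↔ (γ = α + β + 1 - (a + 1) / p ∧ 0 < α ∧ a + 1 < p * (β + 1)) :=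
  stmt_11_general a p α β γ hp
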